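/- Under the stated block-operator hypotheses, assume in addition that ker(A0 − λ) = {0} or ker(A1 − λ) = {0}. Let X be a contractive solution of the Riccati equation, P the orthogonal projection of H onto H0 × {0}, and Q the orthogonal projection of H onto the graph G(X). Then neither √2/2 nor −√2/2 is an eigenvalue of the self-adjoint operator P − Q, i.e. ker(P − Q − (√2/2)·I) = {0} and ker(P − Q + (√2/2)·I) = {0}. -/

import Mathlib

set_option synthInstance.maxHeartbeats 1000000
set_option maxHeartbeats 1000000

open ContinuousLinearMap
open scoped InnerProductSpace Pointwise

/-- The graph `{(x, X x) : x ∈ H0}` of a bounded operator `X : H0 → H1`, as a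
subspace of the Hilbert direct sum `H = H0 ⊕ H1` (modelled as `WithLp 2 (H0 × H1)`). -/
noncomputable def graphSubspace {H0 H1 : Type*}
    [NormedAddCommGroup H0] [InnerProductSpace ℂ H0] [CompleteSpace H0]
    [NormedAddCommGroup H1] [InnerProductSpace ℂ H1] [CompleteSpace H1]
    (X : H0 →L[ℂ] H1) : Submodule ℂ (WithLp 2 (H0 × H1)) :=
  LinearMap.range
    (((WithLp.prodContinuousLinearEquiv 2 ℂ H0 H1).symm.toContinuousLinearMap ∘L
      (ContinuousLinearMap.id ℂ H0).prod X : H0 →ₗ[ℂ] WithLp 2 (H0 × H1)))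

section Aux

variable {H0 H1 : Type*}
    [NormedAddCommGroup H0] [InnerProductSpace ℂ H0] [CompleteSpace H0]
    [NormedAddCommGroup H1] [InnerProductSpace ℂ H1] [CompleteSpace H1]

lemma aux_mem_graphSubspace_iff (X : H0 →L[ℂ] H1) (z : WithLp 2 (H0 × H1)) :
    z ∈ graphSubspace X ↔ z.snd = X z.fst := by
  constructor
  · rintro ⟨u, rfl⟩; rfl
  · intro h
    refine ⟨z.fst, ?_⟩
    show WithLp.toLp 2 ((z.fst, X z.fst) : H0 × H1) = WithLp.toLp 2 z.ofLp
    exact congrArg (WithLp.toLp 2) (Prod.ext rfl h.symm)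

variable {H : Type*} [NormedAddCommGroup H] [InnerProductSpace ℂ H] [CompleteSpace H]

/-- A self-adjoint operator whose complex spectrum has nonnegative real part is positive. -/
lemma aux_isPositive_of_spectrum (T : H →L[ℂ] H) (hT : IsSelfAdjoint T)
    (h : ∀ t ∈ spectrum ℂ T, 0 ≤ t.re) : T.IsPositive := by
  rw [← ContinuousLinearMap.nonneg_iff_isPositive]
  rw [StarOrderedRing.nonneg_iff_spectrum_nonneg (R := ℝ) T hT]
  intro t ht
  have h2 : (t : ℂ) ∈ spectrum ℂ T := spectrum.algebraMap_mem ℂ ht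
  simpa using h _ h2

/-- A positive operator with vanishing quadratic form at `v` kills `v`. -/
lemma aux_apply_eq_zero (T : H →L[ℂ] H) (hT : T.IsPositive) (v : H)
    (hv : (⟪v, T v⟫_ℂ).re = 0) : T v = 0 := by
  have hT' : 0 ≤ T := (ContinuousLinearMap.nonneg_iff_isPositive T).mpr hT
  set b := CFC.sqrt T with hb
  have hbb : b * b = T := CFC.sqrt_mul_sqrt_self T hT'
  have hbsa : IsSelfAdjoint b := IsSelfAdjoint.of_nonneg (CFC.sqrt_nonneg T)
  have hTv : T v = b (b v) := by rw [← hbb]; rfl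
  have key : ⟪v, T v⟫_ℂ = ⟪b v, b v⟫_ℂ := by
    rw [hTv, ← ContinuousLinearMap.adjoint_inner_left b]
    rw [← ContinuousLinearMap.star_eq_adjoint, hbsa.star_eq]
  have hb0 : b v = 0 := by
    rw [key] at hv
    have h2 : ‖b v‖ ^ 2 = 0 := by
      rw [← inner_self_eq_norm_sq (𝕜 := ℂ) (b v), RCLike.re_to_complex]; exact hv
    have : ‖b v‖ = 0 := by nlinarith [norm_nonneg (b v)]
    simpa using this
  rw [hTv, hb0, map_zero]

/-- For a self-adjoint idempotent `R`, `z - R z` is orthogonal to the range of `R`. -/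
lemma aux_ortho (R : H →L[ℂ] H) (hR : IsSelfAdjoint R) (hRi : IsIdempotentElem R)
    (z w : H) (hw : w ∈ LinearMap.range (R : H →ₗ[ℂ] H)) : ⟪z - R z, w⟫_ℂ = 0 := by
  obtain ⟨a, rfl⟩ := hw
  change ⟪z - R z, R a⟫_ℂ = 0
  rw [← ContinuousLinearMap.adjoint_inner_left R, ← ContinuousLinearMap.star_eq_adjoint,
    hR.star_eq, map_sub]
  have h2 : R (R z) = R z := by rw [← ContinuousLinearMap.mul_apply, hRi]
  simp [h2]

/-- Core argument: an eigenvector of `P - Q` for an eigenvalue `c` with `c * c = 1/2`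
must vanish. -/
lemma aux_eigen
    (A0 : H0 →L[ℂ] H0) (A1 : H1 →L[ℂ] H1) (V : H1 →L[ℂ] H0) (lam : ℝ)
    (hA0 : IsSelfAdjoint A0) (hA1 : IsSelfAdjoint A1)
    (hspec0 : ∀ w ∈ spectrum ℂ A0, w.re ≤ lam)
    (hspec1 : ∀ w ∈ spectrum ℂ A1, lam ≤ w.re)
    (hker : (∀ x : H0, A0 x = (lam : ℂ) • x → x = 0) ∨
            (∀ y : H1, A1 y = (lam : ℂ) • y → y = 0))
    (X : H0 →L[ℂ] H1)
    (hRic : A1 ∘L X - X ∘L A0 - X ∘L V ∘L X + ContinuousLinearMap.adjoint V = 0)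
    (P Q : WithLp 2 (H0 × H1) →L[ℂ] WithLp 2 (H0 × H1))
    (hP : IsSelfAdjoint P) (hPidem : IsIdempotentElem P)
    (hPran : LinearMap.range (P : WithLp 2 (H0 × H1) →ₗ[ℂ] WithLp 2 (H0 × H1)) = graphSubspace (0 : H0 →L[ℂ] H1))
    (hQ : IsSelfAdjoint Q) (hQidem : IsIdempotentElem Q)
    (hQran : LinearMap.range (Q : WithLp 2 (H0 × H1) →ₗ[ℂ] WithLp 2 (H0 × H1)) = graphSubspace X)
    (c : ℂ) (hc2 : c * c = 1/2)
    (z : WithLp 2 (H0 × H1)) (hz : (P - Q) z = c • z) : z = 0 := by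
  have hc0 : c ≠ 0 := by
    intro h; rw [h] at hc2; norm_num at hc2
  -- the embedding of a pair into the L² product
  set e : H0 × H1 ≃ WithLp 2 (H0 × H1) := (WithLp.equiv 2 (H0 × H1)).symm with he
  -- components of z
  set x : H0 := z.fst with hx
  set y : H1 := z.snd with hy
  -- Q z lies on the graph
  have hQmem : Q z ∈ graphSubspace X := by
    rw [← hQran]; exact ⟨z, rfl⟩
  set u : H0 := (Q z).fst with hu
  have hQsnd : (Q z).snd = X u := (aux_mem_graphSubspace_iff X (Q z)).mp hQmem
  -- P z lies on H0 × {0}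
  have hPmem : P z ∈ graphSubspace (0 : H0 →L[ℂ] H1) := by
    rw [← hPran]; exact ⟨z, rfl⟩
  have hPsnd : (P z).snd = 0 := by
    simpa using (aux_mem_graphSubspace_iff (0 : H0 →L[ℂ] H1) (P z)).mp hPmem
  -- P z has first component z.fst
  have hPfst : (P z).fst = x := by
    have key : ∀ v : H0, ⟪x - (P z).fst, v⟫_ℂ = 0 := by
      intro v
      have hv : e (v, 0) ∈ LinearMap.range (P : WithLp 2 (H0 × H1) →ₗ[ℂ] WithLp 2 (H0 × H1)) := by
        rw [hPran, aux_mem_graphSubspace_iff]; simp [he]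
      have h0 := aux_ortho P hP hPidem z (e (v, 0)) hv
      rw [WithLp.prod_inner_apply] at h0
      simpa [he, inner_sub_left] using h0
    have := key (x - (P z).fst)
    rw [inner_self_eq_zero] at this
    exact (sub_eq_zero.mp this).symm
  -- orthogonality of z - Q z to the graph
  have hstar : (x - u) + ContinuousLinearMap.adjoint X (y - X u) = 0 := by
    have key : ∀ v : H0,
        ⟪(x - u) + ContinuousLinearMap.adjoint X (y - X u), v⟫_ℂ = 0 := by
      intro v
      have hv : e (v, X v) ∈ LinearMap.range (Q : WithLp 2 (H0 × H1) →ₗ[ℂ] WithLp 2 (H0 × H1)) := by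
        rw [hQran, aux_mem_graphSubspace_iff]; simp [he]
      have h0 := aux_ortho Q hQ hQidem z (e (v, X v)) hv
      rw [WithLp.prod_inner_apply] at h0
      have h1 : ⟪x - u, v⟫_ℂ + ⟪y - X u, X v⟫_ℂ = 0 := by
        simpa [he, hQsnd, inner_sub_left] using h0
      rw [inner_add_left, ContinuousLinearMap.adjoint_inner_left]
      exact h1
    have := key ((x - u) + ContinuousLinearMap.adjoint X (y - X u))
    rwa [inner_self_eq_zero] at this
  -- eigen equation componentwise
  have hz' : P z - Q z = c • z := by rwa [ContinuousLinearMap.sub_apply] at hz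
  have e1 : x - u = c • x := by
    have := congrArg WithLp.fst hz'
    simpa [hPfst] using this
  have e2 : -(X u) = c • y := by
    have := congrArg WithLp.snd hz'
    simpa [hPsnd, hQsnd] using this
  -- solve for u and y
  have hu' : u = x - c • x := by
    rw [← e1]; abel
  have hy' : y = c⁻¹ • (-(X u)) := by
    rw [e2, smul_smul, inv_mul_cancel₀ hc0, one_smul]
  -- the key identity X†X x = x
  have hXu : X u = X x - c • X x := by rw [hu', map_sub, map_smul]
  have harg : y - X u = (c⁻¹ * -(1 - c) - (1 - c)) • X x := by
    rw [hy', hXu]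
    module
  have hstar' : c • x + (c⁻¹ * -(1 - c) - (1 - c)) • ContinuousLinearMap.adjoint X (X x) = 0 := by
    rw [← e1, ← map_smul, ← harg]; exact hstar
  have hkey : ContinuousLinearMap.adjoint X (X x) = x := by
    have h3 := congrArg (fun w => (2 * c) • w) hstar'
    simp only [smul_add, smul_smul, smul_zero] at h3
    have hc1 : (2 * c) * c = 1 := by linear_combination 2 * hc2
    have hc4 : (2 * c) * (c⁻¹ * -(1 - c) - (1 - c)) = -1 := by
      field_simp
      linear_combination 2 * hc2
    rw [hc1, hc4, one_smul, neg_one_smul] at h3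
    have h4 : x - ContinuousLinearMap.adjoint X (X x) = 0 := by
      rw [sub_eq_add_neg]; exact h3
    exact (sub_eq_zero.mp h4).symm
  -- ‖X x‖² = ‖x‖²
  have hip : ⟪X x, X x⟫_ℂ = ⟪x, x⟫_ℂ := by
    rw [← ContinuousLinearMap.adjoint_inner_left X, hkey]
  have hxx : (⟪x, x⟫_ℂ).re = ‖x‖ ^ 2 := by
    rw [← inner_self_eq_norm_sq (𝕜 := ℂ) x, RCLike.re_to_complex]
  have hXxXx : (⟪X x, X x⟫_ℂ).re = ‖X x‖ ^ 2 := by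
    rw [← inner_self_eq_norm_sq (𝕜 := ℂ) (X x), RCLike.re_to_complex]
  have hn2 : ‖X x‖ ^ 2 = ‖x‖ ^ 2 := by
    rw [← hxx, ← hXxXx, hip]
  -- Riccati pairing
  have h0 := DFunLike.congr_fun hRic x
  simp only [ContinuousLinearMap.add_apply, ContinuousLinearMap.sub_apply,
    ContinuousLinearMap.comp_apply, ContinuousLinearMap.zero_apply] at h0
  have hinner := congrArg (fun w => ⟪X x, w⟫_ℂ) h0
  simp only [inner_add_right, inner_sub_right, inner_zero_right] at hinner
  rw [← ContinuousLinearMap.adjoint_inner_left X, ← ContinuousLinearMap.adjoint_inner_left X,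
    hkey, ContinuousLinearMap.adjoint_inner_right] at hinner
  have hconj : ⟪V (X x), x⟫_ℂ = (starRingEnd ℂ) ⟪x, V (X x)⟫_ℂ := (inner_conj_symm _ _).symm
  rw [hconj] at hinner
  have hre := congrArg Complex.re hinner
  simp only [Complex.add_re, Complex.sub_re, Complex.conj_re, Complex.zero_re] at hre
  have hre' : (⟪X x, A1 (X x)⟫_ℂ).re = (⟪x, A0 x⟫_ℂ).re := by linarith
  -- the positive operators lam - A0 and A1 - lam
  set T0 : H0 →L[ℂ] H0 := algebraMap ℝ (H0 →L[ℂ] H0) lam - A0 with hT0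
  set T1 : H1 →L[ℂ] H1 := A1 - algebraMap ℝ (H1 →L[ℂ] H1) lam with hT1
  have hsa0 : IsSelfAdjoint (algebraMap ℝ (H0 →L[ℂ] H0) lam) := by
    rw [IsSelfAdjoint, Algebra.algebraMap_eq_smul_one, star_smul, star_one, star_trivial]
  have hsa1 : IsSelfAdjoint (algebraMap ℝ (H1 →L[ℂ] H1) lam) := by
    rw [IsSelfAdjoint, Algebra.algebraMap_eq_smul_one, star_smul, star_one, star_trivial]
  have hT0sa : IsSelfAdjoint T0 := hsa0.sub hA0
  have hT1sa : IsSelfAdjoint T1 := hA1.sub hsa1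
  have hT0pos : T0.IsPositive := by
    apply aux_isPositive_of_spectrum T0 hT0sa
    intro t ht
    have hspecT0 : spectrum ℂ T0 = ({((lam : ℂ))} : Set ℂ) - spectrum ℂ A0 := by
      rw [hT0, IsScalarTower.algebraMap_apply ℝ ℂ (H0 →L[ℂ] H0)]
      exact (spectrum.singleton_sub_eq A0 ((lam : ℂ))).symm
    rw [hspecT0, Set.mem_sub] at ht
    obtain ⟨p, hp, q, hq, rfl⟩ := ht
    rw [Set.mem_singleton_iff] at hp
    subst hp
    have := hspec0 q hq
    rw [Complex.sub_re, Complex.ofReal_re]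
    linarith
  have hT1pos : T1.IsPositive := by
    apply aux_isPositive_of_spectrum T1 hT1sa
    intro t ht
    have hspecT1 : spectrum ℂ T1 = spectrum ℂ A1 - ({((lam : ℂ))} : Set ℂ) := by
      rw [hT1, IsScalarTower.algebraMap_apply ℝ ℂ (H1 →L[ℂ] H1)]
      exact (spectrum.sub_singleton_eq A1 ((lam : ℂ))).symm
    rw [hspecT1, Set.mem_sub] at ht
    obtain ⟨p, hp, q, hq, rfl⟩ := ht
    rw [Set.mem_singleton_iff] at hq
    subst hq
    have := hspec1 p hp
    rw [Complex.sub_re, Complex.ofReal_re]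
    linarith
  -- the quadratic forms
  have hT0apply : T0 x = ((lam : ℂ)) • x - A0 x := by
    rw [hT0, ContinuousLinearMap.sub_apply, Algebra.algebraMap_eq_smul_one,
      ContinuousLinearMap.smul_apply, ContinuousLinearMap.one_apply,
      ← algebraMap_smul ℂ lam x, Complex.coe_algebraMap]
  have hT1apply : T1 (X x) = A1 (X x) - ((lam : ℂ)) • X x := by
    rw [hT1, ContinuousLinearMap.sub_apply, Algebra.algebraMap_eq_smul_one,
      ContinuousLinearMap.smul_apply, ContinuousLinearMap.one_apply,
      ← algebraMap_smul ℂ lam (X x), Complex.coe_algebraMap]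
  have hform0 : (⟪x, T0 x⟫_ℂ).re = lam * ‖x‖ ^ 2 - (⟪x, A0 x⟫_ℂ).re := by
    rw [hT0apply, inner_sub_right, inner_smul_right]
    rw [Complex.sub_re, Complex.re_ofReal_mul, hxx]
  have hform1 : (⟪X x, T1 (X x)⟫_ℂ).re = (⟪X x, A1 (X x)⟫_ℂ).re - lam * ‖X x‖ ^ 2 := by
    rw [hT1apply, inner_sub_right, inner_smul_right]
    rw [Complex.sub_re, Complex.re_ofReal_mul, hXxXx]
  have hpos0 : 0 ≤ (⟪x, T0 x⟫_ℂ).re := by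
    have := hT0pos.inner_nonneg_right x
    simpa using (Complex.le_def.mp this).1
  have hpos1 : 0 ≤ (⟪X x, T1 (X x)⟫_ℂ).re := by
    have := hT1pos.inner_nonneg_right (X x)
    simpa using (Complex.le_def.mp this).1
  have hzero0 : (⟪x, T0 x⟫_ℂ).re = 0 := by
    rw [hform0]; rw [hform0] at hpos0; rw [hform1] at hpos1; rw [hn2] at hpos1; linarith
  have hzero1 : (⟪X x, T1 (X x)⟫_ℂ).re = 0 := by
    rw [hform1]; rw [hform0] at hpos0; rw [hform1] at hpos1; rw [hn2] at hpos1
    rw [hn2]; linarith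
  have hT0x0 : T0 x = 0 := aux_apply_eq_zero T0 hT0pos x hzero0
  have hT1x0 : T1 (X x) = 0 := aux_apply_eq_zero T1 hT1pos (X x) hzero1
  have hA0x : A0 x = ((lam : ℂ)) • x := by
    have := hT0x0; rw [hT0apply, sub_eq_zero] at this; exact this.symm
  have hA1Xx : A1 (X x) = ((lam : ℂ)) • X x := by
    have := hT1x0; rw [hT1apply, sub_eq_zero] at this; exact this
  -- conclude x = 0
  have hx0 : x = 0 := by
    rcases hker with h | h
    · exact h x hA0x
    · have hXx0 : X x = 0 := h (X x) hA1Xx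
      have : ‖x‖ ^ 2 = 0 := by rw [← hn2, hXx0]; simp
      have : ‖x‖ = 0 := by nlinarith [norm_nonneg x]
      simpa using this
  have hu0 : u = 0 := by rw [hu', hx0]; simp
  have hy0 : y = 0 := by rw [hy', hu0]; simp
  show WithLp.toLp 2 ((x, y) : H0 × H1) = WithLp.toLp 2 (0 : H0 × H1)
  exact congrArg (WithLp.toLp 2) (Prod.ext hx0 hy0)

end Aux

/-- **`±√2/2` is not an eigenvalue of `P - Q`** (Theorem 2.4 (ii)): if moreover
`ker(A0-λ) = {0}` or `ker(A1-λ) = {0}`, `X` is a contractive Riccati solution,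
`P` the orthogonal projection onto `H0 × {0}` and `Q` the orthogonal projection
onto the graph of `X`, then `ker(P - Q ∓ (√2/2) I) = {0}`. -/
theorem sqrt_two_div_two_not_eigenvalue_proj_sub_proj
    {H0 H1 : Type*}
    [NormedAddCommGroup H0] [InnerProductSpace ℂ H0] [CompleteSpace H0]
    [NormedAddCommGroup H1] [InnerProductSpace ℂ H1] [CompleteSpace H1]
    [TopologicalSpace.SeparableSpace H0] [TopologicalSpace.SeparableSpace H1]
    (A0 : H0 →L[ℂ] H0) (A1 : H1 →L[ℂ] H1) (V : H1 →L[ℂ] H0) (lam : ℝ)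
    (hA0 : IsSelfAdjoint A0) (hA1 : IsSelfAdjoint A1)
    (hspec0 : ∀ z ∈ spectrum ℂ A0, z.re ≤ lam)
    (hspec1 : ∀ z ∈ spectrum ℂ A1, lam ≤ z.re)
    (hker : (∀ x : H0, A0 x = (lam : ℂ) • x → x = 0) ∨
            (∀ y : H1, A1 y = (lam : ℂ) • y → y = 0))
    (X : H0 →L[ℂ] H1) (hX : ‖X‖ ≤ 1)
    (hRic : A1 ∘L X - X ∘L A0 - X ∘L V ∘L X + ContinuousLinearMap.adjoint V = 0)
    (P Q : WithLp 2 (H0 × H1) →L[ℂ] WithLp 2 (H0 × H1))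
    (hP : IsSelfAdjoint P) (hPidem : IsIdempotentElem P)
    (hPran : LinearMap.range (P : WithLp 2 (H0 × H1) →ₗ[ℂ] WithLp 2 (H0 × H1)) = graphSubspace (0 : H0 →L[ℂ] H1))
    (hQ : IsSelfAdjoint Q) (hQidem : IsIdempotentElem Q)
    (hQran : LinearMap.range (Q : WithLp 2 (H0 × H1) →ₗ[ℂ] WithLp 2 (H0 × H1)) = graphSubspace X) :
    (∀ z : WithLp 2 (H0 × H1),
        (P - Q) z = ((Real.sqrt 2 / 2 : ℝ) : ℂ) • z → z = 0) ∧
    (∀ z : WithLp 2 (H0 × H1),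
        (P - Q) z = ((-(Real.sqrt 2 / 2) : ℝ) : ℂ) • z → z = 0) := by
  have hhalf : (Real.sqrt 2 / 2) * (Real.sqrt 2 / 2) = (1/2 : ℝ) := by
    rw [div_mul_div_comm, Real.mul_self_sqrt (by norm_num)]
    norm_num
  constructor
  · intro z hz
    refine aux_eigen A0 A1 V lam hA0 hA1 hspec0 hspec1 hker X hRic P Q hP hPidem hPran
      hQ hQidem hQran ((Real.sqrt 2 / 2 : ℝ) : ℂ) ?_ z hz
    have h2 : ((Real.sqrt 2 : ℝ) : ℂ) ^ 2 = 2 := by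
      rw [← Complex.ofReal_pow, Real.sq_sqrt (by norm_num : (0:ℝ) ≤ 2)]
      norm_num
    push_cast
    linear_combination (1/4 : ℂ) * h2
  · intro z hz
    refine aux_eigen A0 A1 V lam hA0 hA1 hspec0 hspec1 hker X hRic P Q hP hPidem hPran
      hQ hQidem hQran ((-(Real.sqrt 2 / 2) : ℝ) : ℂ) ?_ z hz
    have h2 : ((Real.sqrt 2 : ℝ) : ℂ) ^ 2 = 2 := by
      rw [← Complex.ofReal_pow, Real.sq_sqrt (by norm_num : (0:ℝ) ≤ 2)]
      norm_num
    push_cast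
    linear_combination (1/4 : ℂ) * h2
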